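/- For a drift parameterized as f(z) = -(D(z)+Q(z))∇H(z) + τ(z) with τ_i = Σ_j ∂_j(D_ij + Q_ij), the Fokker–Planck equation can be written in the compact form ∂p_t/∂t = ∇ · [ (D(z)+Q(z)) ( p_t ∇H + ∇p_t ) ]. -/

import Mathlib

noncomputable def pd {ι : Type*} [Fintype ι] [DecidableEq ι]
    (f : (ι → ℝ) → ℝ) (i : ι) (z : ι → ℝ) : ℝ :=
  fderiv ℝ f z (Pi.single i 1)

section helpers
variable {ι : Type*} [Fintype ι] [DecidableEq ι]

lemma pd_congr {f g : (ι → ℝ) → ℝ} (h : ∀ w, f w = g w) (i : ι) (z : ι → ℝ) :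
    pd f i z = pd g i z := by
  have : f = g := funext h
  rw [this]

lemma pd_contDiff {f : (ι → ℝ) → ℝ} (hf : ContDiff ℝ (⊤ : ℕ∞) f) (i : ι) :
    ContDiff ℝ (⊤ : ℕ∞) (pd f i) := by
  have h := (contDiff_infty_iff_fderiv.mp hf).2
  exact h.clm_apply contDiff_const

lemma pd_add {f g : (ι → ℝ) → ℝ} {z : ι → ℝ} (hf : DifferentiableAt ℝ f z)
    (hg : DifferentiableAt ℝ g z) (i : ι) :
    pd (fun w => f w + g w) i z = pd f i z + pd g i z := by
  unfold pd; rw [fderiv_fun_add hf hg]; rfl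

lemma pd_neg {f : (ι → ℝ) → ℝ} {z : ι → ℝ} (i : ι) :
    pd (fun w => -f w) i z = -pd f i z := by
  unfold pd; rw [fderiv_fun_neg]; rfl

lemma pd_mul {f g : (ι → ℝ) → ℝ} {z : ι → ℝ} (hf : DifferentiableAt ℝ f z)
    (hg : DifferentiableAt ℝ g z) (i : ι) :
    pd (fun w => f w * g w) i z = pd f i z * g z + f z * pd g i z := by
  unfold pd; rw [fderiv_fun_mul hf hg]; simp; ring

lemma pd_sum {s : Finset ι} {f : ι → (ι → ℝ) → ℝ} {z : ι → ℝ}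
    (hf : ∀ j ∈ s, DifferentiableAt ℝ (f j) z) (i : ι) :
    pd (fun w => ∑ j ∈ s, f j w) i z = ∑ j ∈ s, pd (f j) i z := by
  unfold pd; rw [fderiv_fun_sum hf]; simp

lemma pd_comm {f : (ι → ℝ) → ℝ} (hf : ContDiff ℝ (⊤ : ℕ∞) f) (i j : ι) (z : ι → ℝ) :
    pd (fun w => pd f j w) i z = pd (fun w => pd f i w) j z := by
  have hdf : ContDiff ℝ (⊤ : ℕ∞) (fderiv ℝ f) := (contDiff_infty_iff_fderiv.mp hf).2
  have key : ∀ a b : ι, pd (fun w => pd f b w) a z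
      = fderiv ℝ (fderiv ℝ f) z (Pi.single a 1) (Pi.single b 1) := by
    intro a b
    unfold pd
    rw [fderiv_clm_apply (hdf.differentiable (by simp) z)
      (differentiableAt_const _)]
    simp
  rw [key i j, key j i]
  have hsymm : IsSymmSndFDerivAt ℝ f z := by
    apply (hf.contDiffAt).isSymmSndFDerivAt
    rw [minSmoothness_of_isRCLikeNormedField]; exact WithTop.coe_le_coe.mpr (le_top : (2:ℕ∞) ≤ ⊤)
  exact hsymm (Pi.single i 1) (Pi.single j 1)

lemma dd {f : (ι → ℝ) → ℝ} (hf : ContDiff ℝ (⊤ : ℕ∞) f) (w : ι → ℝ) :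
    DifferentiableAt ℝ f w :=
  (hf.differentiable (by simp)).differentiableAt

lemma sum_pd_pd_skew {d : ℕ} (M : Fin d → Fin d → (Fin d → ℝ) → ℝ)
    (hM : ∀ i j, ContDiff ℝ (⊤ : ℕ∞) (M i j))
    (hskew : ∀ i j w, M i j w = - M j i w) (z : Fin d → ℝ) :
    ∑ i, ∑ j, pd (fun w => pd (M i j) j w) i z = 0 := by
  have key : ∀ i j, pd (fun w => pd (M i j) j w) i z
      = - pd (fun w => pd (M j i) i w) j z := by
    intro i j
    have h1 : ∀ w, pd (M i j) j w = -(pd (M j i) j w) := by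
      intro w
      rw [pd_congr (fun v => hskew i j v) j w, pd_neg]
    rw [pd_congr h1 i z, pd_neg, pd_comm (hM j i) i j z]
  have h2 : ∑ i, ∑ j, pd (fun w => pd (M i j) j w) i z
      = - ∑ i, ∑ j, pd (fun w => pd (M i j) j w) i z := by
    calc ∑ i, ∑ j, pd (fun w => pd (M i j) j w) i z
        = ∑ i, ∑ j, -(pd (fun w => pd (M j i) i w) j z) :=
          Finset.sum_congr rfl fun i _ => Finset.sum_congr rfl fun j _ => key i j
      _ = - ∑ i, ∑ j, pd (fun w => pd (M i j) j w) i z := by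
          rw [Finset.sum_comm]
          simp [Finset.sum_neg_distrib]
  linarith
end helpers

/-- **Compact form of the Fokker–Planck equation under the recipe drift.**
For a drift `f i z = -∑ j (D i j + Q i j) ∂_j H + τ i` with
`τ i = ∑ j ∂_j (D i j + Q i j)`, the right-hand side of the Fokker–Planck
equation `-∑ i ∂_i (f_i p) + ∑ i j ∂_i ∂_j (D_ij p)` can be written in the
compact divergence form `∑ i ∂_i [∑ j (D_ij + Q_ij)(p ∂_j H + ∂_j p)]`. -/
theorem fokker_planck_compact_form {d : ℕ}
    (D Q : Fin d → Fin d → (Fin d → ℝ) → ℝ)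
    (H : (Fin d → ℝ) → ℝ)
    (hD : ∀ i j, ContDiff ℝ (⊤ : ℕ∞) (D i j)) (hQ : ∀ i j, ContDiff ℝ (⊤ : ℕ∞) (Q i j))
    (hH : ContDiff ℝ (⊤ : ℕ∞) H)
    (hDsymm : ∀ i j z, D i j z = D j i z)
    (hDpsd : ∀ (z : Fin d → ℝ) (v : Fin d → ℝ), 0 ≤ ∑ i, ∑ j, v i * D i j z * v j)
    (hQskew : ∀ i j z, Q i j z = - Q j i z)
    (f : Fin d → (Fin d → ℝ) → ℝ)
    (hf : ∀ i z, f i z =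
      -(∑ j, (D i j z + Q i j z) * pd H j z) +
        ∑ j, pd (fun w => D i j w + Q i j w) j z)
    (p : (Fin d → ℝ) → ℝ) (hp : ContDiff ℝ (⊤ : ℕ∞) p) :
    ∀ z, (-∑ i, pd (fun w => f i w * p w) i z) +
        ∑ i, ∑ j, pd (fun w => pd (fun v => D i j v * p v) j w) i z =
      ∑ i, pd (fun w => ∑ j, (D i j w + Q i j w) * (p w * pd H j w + pd p j w)) i z := by
  intro z
  have hD' : ∀ i j, ContDiff ℝ (⊤:ℕ∞) (D i j) := fun i j => (hD i j).of_le (by simp)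
  have hQ' : ∀ i j, ContDiff ℝ (⊤:ℕ∞) (Q i j) := fun i j => (hQ i j).of_le (by simp)
  have hH' : ContDiff ℝ (⊤:ℕ∞) H := hH.of_le (by simp)
  have hp' : ContDiff ℝ (⊤:ℕ∞) p := hp.of_le (by simp)
  have cA : ∀ i j, ContDiff ℝ (⊤:ℕ∞) (fun w => D i j w + Q i j w) :=
    fun i j => (hD' i j).add (hQ' i j)
  -- X term smoothness : (D+Q) * pd H * p
  have cX : ∀ i j, ContDiff ℝ (⊤:ℕ∞) (fun w => (D i j w + Q i j w) * pd H j w * p w) :=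
    fun i j => ((cA i j).mul (pd_contDiff hH' j)).mul hp'
  have cPD : ∀ i j, ContDiff ℝ (⊤:ℕ∞) (fun w => pd (D i j) j w * p w) :=
    fun i j => (pd_contDiff (hD' i j) j).mul hp'
  have cPQ : ∀ i j, ContDiff ℝ (⊤:ℕ∞) (fun w => pd (Q i j) j w * p w) :=
    fun i j => (pd_contDiff (hQ' i j) j).mul hp'
  have cPA : ∀ i j, ContDiff ℝ (⊤:ℕ∞) (fun w => pd (fun v => D i j v + Q i j v) j w * p w) :=
    fun i j => (pd_contDiff (cA i j) j).mul hp'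
  have cY : ∀ i j, ContDiff ℝ (⊤:ℕ∞) (fun w => D i j w * pd p j w) :=
    fun i j => (hD' i j).mul (pd_contDiff hp' j)
  have cZ : ∀ i j, ContDiff ℝ (⊤:ℕ∞) (fun w => Q i j w * pd p j w) :=
    fun i j => (hQ' i j).mul (pd_contDiff hp' j)
  -- Step 1: expand the drift term
  have L1 : ∀ i, pd (fun w => f i w * p w) i z
      = ∑ j, (-(pd (fun w => (D i j w + Q i j w) * pd H j w * p w) i z)
          + pd (fun w => pd (fun v => D i j v + Q i j v) j w * p w) i z) := by
    intro i
    have hstep : ∀ w, f i w * p w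
        = ∑ j, (-((D i j w + Q i j w) * pd H j w * p w)
            + pd (fun v => D i j v + Q i j v) j w * p w) := by
      intro w
      rw [hf i w, Finset.sum_add_distrib, add_mul, neg_mul, Finset.sum_mul, Finset.sum_mul,
        Finset.sum_neg_distrib]
    rw [pd_congr hstep i z,
      pd_sum (fun j _ => ((((cX i j).neg).add (cPA i j)).differentiable
        (by simp)).differentiableAt) i]
    refine Finset.sum_congr rfl fun j _ => ?_
    rw [pd_add (dd (cX i j).neg z) (dd (cPA i j) z) i, pd_neg]
  -- Step 2: expand the diffusion term
  have L2 : ∀ i j, pd (fun w => pd (fun v => D i j v * p v) j w) i z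
      = pd (fun w => pd (D i j) j w * p w) i z + pd (fun w => D i j w * pd p j w) i z := by
    intro i j
    rw [pd_congr (fun w => pd_mul (dd (hD' i j) w) (dd hp' w) j) i z,
      pd_add (dd (cPD i j) z) (dd (cY i j) z) i]
  -- Step 3: expand the RHS term
  have L3 : ∀ i, pd (fun w => ∑ j, (D i j w + Q i j w) * (p w * pd H j w + pd p j w)) i z
      = ∑ j, (pd (fun w => (D i j w + Q i j w) * pd H j w * p w) i z
          + pd (fun w => D i j w * pd p j w) i z
          + pd (fun w => Q i j w * pd p j w) i z) := by
    intro i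
    rw [pd_sum (fun j _ => dd ((cA i j).mul ((hp'.mul (pd_contDiff hH' j)).add
      (pd_contDiff hp' j))) z) i]
    refine Finset.sum_congr rfl fun j _ => ?_
    rw [pd_congr
      (g := fun w => (D i j w + Q i j w) * pd H j w * p w
        + (D i j w * pd p j w + Q i j w * pd p j w)) (fun w => by ring) i z,
      pd_add (dd (cX i j) z) (dd ((cY i j).add (cZ i j)) z) i,
      pd_add (dd (cY i j) z) (dd (cZ i j) z) i, ← add_assoc]
  -- Step 4: split pd of A into pd of D and pd of Q
  have L4 : ∀ i j, pd (fun w => pd (fun v => D i j v + Q i j v) j w * p w) i z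
      = pd (fun w => pd (D i j) j w * p w) i z + pd (fun w => pd (Q i j) j w * p w) i z := by
    intro i j
    rw [pd_congr (g := fun w => pd (D i j) j w * p w + pd (Q i j) j w * p w)
      (fun w => by rw [pd_add (dd (hD' i j) w) (dd (hQ' i j) w) j, add_mul]) i z,
      pd_add (dd (cPD i j) z) (dd (cPQ i j) z) i]
  -- Step 5: the skew part vanishes
  have L5 : ∑ i, ∑ j, (pd (fun w => pd (Q i j) j w * p w) i z
      + pd (fun w => Q i j w * pd p j w) i z) = 0 := by
    have h1 : ∀ i j, pd (fun w => pd (Q i j) j w * p w) i z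
        + pd (fun w => Q i j w * pd p j w) i z
        = pd (fun w => pd (fun v => Q i j v * p v) j w) i z := by
      intro i j
      rw [pd_congr (fun w => pd_mul (dd (hQ' i j) w) (dd hp' w) j) i z,
        pd_add (dd (cPQ i j) z) (dd (cZ i j) z) i]
    simp only [h1]
    exact sum_pd_pd_skew (fun i j => fun v => Q i j v * p v)
      (fun i j => (hQ' i j).mul hp')
      (fun i j w => by show Q i j w * p w = -(Q j i w * p w); rw [hQskew i j w]; ring) z
  simp only [L1, L2, L3]
  simp only [L4]
  simp only [Finset.sum_add_distrib, Finset.sum_neg_distrib, neg_add] at L5 ⊢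
  linarith
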